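/- arXiv:1402.7289 — 6 statements merged into one kernel-verified Lean document; each statement's English description precedes it below -/
import Mathlib

section
/- Let n ≥ 1 and let S be a subsemigroup of T_n consisting only of nonpermutational transformations; for i ∈ {1,…,n} let S_i = {f ∈ S : the unique fixed point of f is i}. Suppose that for all i < j and k < ℓ with i ≠ k there exists f ∈ S_n with if = j and kf = ℓ. Then for all i, j ∈ {1,…,n} and all f ∈ S_i: (i) if j < i then j < jf, and (ii) if i ≤ j then jf = i. -/
/-- A transformation `f` of `Fin n` is *nonpermutational* if every nonempty
subset `X` with `X.image f = X` is a singleton. -/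
def Nonpermutational {n : ℕ} (f : Fin n → Fin n) : Prop :=
  ∀ X : Finset (Fin n), X.Nonempty → X.image f = X → X.card = 1

/-- `FixIs f i` says that `i` is the unique fixed point of `f`. -/
def FixIs {n : ℕ} (f : Fin n → Fin n) (i : Fin n) : Prop :=
  f i = i ∧ ∀ j, f j = j → j = i

/-!
Let `t` be the largest point, `f ∈ S` with fixed point `i`, and call `p` a descent of `f` if
`f p < p`. If two descents `p₁, p₂` of `f` had different values, a witness `g` of the hypothesis
with `g (f p₁) = p₁`, `g (f p₂) = p₂` would make `f ∘ g` fix both values; so all descents of `f`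
share one value. For `i < t` this value is `a = f t`, and `a = i`: otherwise the orbit of `a`
never descends (a descent would return to `a` and make it periodic), so it climbs monotonically
to `i`, and composing `f` with a witness sending `a ↦ f a`, `i ↦ t` produces an element of `S`
with descents of distinct values `a` and `f (f a)`. Similar compositions rule out any descent
when `i = t`, and any ascent `j < f j` above `i` (it would yield a swap of `i` and `f j`).
-/

open Function

namespace Nonpermutational

variable {n : ℕ} {f : Fin n → Fin n} {i a x y : Fin n}

theorem subsingleton_of_image_eq (hf : Nonpermutational f) {X : Set (Fin n)}
    (hX : f '' X = X) : X.Subsingleton := by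
  classical
  rcases X.eq_empty_or_nonempty with rfl | hne
  · exact Set.subsingleton_empty
  · have hcard := hf X.toFinset (Set.toFinset_nonempty.mpr hne)
      (by simp only [← Set.toFinset_image, hX])
    exact fun x hx y hy => Finset.card_le_one.mp hcard.le x (by simpa) y (by simpa)

theorem eq_of_image_pair (hf : Nonpermutational f) (h : f '' {x, y} = {x, y}) : x = y :=
  hf.subsingleton_of_image_eq h (by simp) (by simp)

theorem eq_of_apply_eq_self (hf : Nonpermutational f) (hx : f x = x) (hy : f y = y) : x = y :=
  hf.eq_of_image_pair (by rw [Set.image_pair, hx, hy])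

theorem eq_of_apply_eq_swap (hf : Nonpermutational f) (hx : f x = y) (hy : f y = x) : x = y :=
  hf.eq_of_image_pair (by rw [Set.image_pair, hx, hy, Set.pair_comm])

theorem eq_of_mem_periodicPts (hf : Nonpermutational f) (hi : f i = i)
    (hx : x ∈ periodicPts f) : x = i :=
  hf.subsingleton_of_image_eq (bijOn_periodicPts f).image_eq hx
    (mk_mem_periodicPts one_pos (IsFixedPt.isPeriodicPt hi 1))

theorem exists_iterate_eq (hf : Nonpermutational f) (hi : f i = i) (x : Fin n) :
    ∃ m, f^[m] x = i := by
  obtain ⟨k, l, hkl, heq⟩ : ∃ k l, k < l ∧ f^[k] x = f^[l] x := by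
    obtain ⟨k, l, hne, heq⟩ := Finite.exists_ne_map_eq_of_infinite (f^[·] x)
    rcases hne.lt_or_gt with h | h
    exacts [⟨k, l, h, heq⟩, ⟨l, k, h, heq.symm⟩]
  refine ⟨k, hf.eq_of_mem_periodicPts hi (mk_mem_periodicPts (Nat.sub_pos_of_lt hkl) ?_)⟩
  rw [IsPeriodicPt, IsFixedPt, ← iterate_add_apply, Nat.sub_add_cancel hkl.le, heq]

theorem iterate_le_of_monotone (hf : Nonpermutational f) (hi : f i = i)
    (hmono : Monotone (f^[·] x)) (k : ℕ) : f^[k] x ≤ i := by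
  obtain ⟨m, hm⟩ := hf.exists_iterate_eq hi x
  calc f^[k] x ≤ f^[k + m] x := hmono (Nat.le_add_right k m)
    _ = i := by rw [iterate_add_apply, hm, iterate_fixed hi]

theorem monotone_iterate_of_apply_lt (hf : Nonpermutational f) (hi : f i = i) (ha : a ≠ i)
    (hdesc : ∀ x, f x < x → f x = a) : Monotone (f^[·] a) := by
  refine monotone_nat_of_le_succ fun k => le_of_not_gt fun hk => ha ?_
  rw [iterate_succ_apply'] at hk
  have hper : f^[k + 1] a = a := by rw [iterate_succ_apply']; exact hdesc _ hk
  exact hf.eq_of_mem_periodicPts hi (mk_mem_periodicPts k.succ_pos hper)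

end Nonpermutational

structure IsRich {n : ℕ} (S : Set (Fin n → Fin n)) (t : Fin n) : Prop where
  comp_mem : ∀ f ∈ S, ∀ g ∈ S, (fun x => g (f x)) ∈ S
  nonpermutational : ∀ f ∈ S, Nonpermutational f
  exists_mem : ∀ i j k l : Fin n, i < j → k < l → i ≠ k → ∃ f ∈ S, f t = t ∧ f i = j ∧ f k = l

namespace IsRich

variable {n : ℕ} {S : Set (Fin n → Fin n)} {t : Fin n} {f : Fin n → Fin n} {i j p₁ p₂ : Fin n}

theorem apply_eq_of_apply_lt_of_apply_lt (hS : IsRich S t) (hf : f ∈ S) (h₁ : f p₁ < p₁)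
    (h₂ : f p₂ < p₂) : f p₁ = f p₂ := by
  by_contra hne
  obtain ⟨g, hg, -, hg₁, hg₂⟩ := hS.exists_mem _ _ _ _ h₁ h₂ hne
  exact hne <| (hS.nonpermutational _ (hS.comp_mem g hg f hf)).eq_of_apply_eq_self
    (show f (g (f p₁)) = f p₁ by rw [hg₁]) (show f (g (f p₂)) = f p₂ by rw [hg₂])

theorem exists_mem_apply_eq_top (hS : IsRich S t) (ht : IsTop t) {k : Fin n} (hij : i < j)
    (hjt : j < t) (hik : i ≠ k) : ∃ g ∈ S, g t = t ∧ g i = j ∧ g k = t := by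
  rcases (ht k).lt_or_eq with hkt | hkt
  · exact hS.exists_mem i j k t hij hkt hik
  · obtain ⟨g, hg, hgt, hgi, -⟩ := hS.exists_mem i j j t hij hjt hij.ne
    exact ⟨g, hg, hgt, hgi, hkt ▸ hgt⟩

theorem apply_top_eq_of_lt (hS : IsRich S t) (ht : IsTop t) (hf : f ∈ S) (hi : f i = i)
    (hit : i < t) : f t = i := by
  have hnp := hS.nonpermutational f hf
  obtain ⟨a, hta⟩ : ∃ a, f t = a := ⟨_, rfl⟩
  rw [hta]
  by_contra ha
  have hat : a < t := (ht a).lt_of_ne fun h => hit.ne' (hnp.eq_of_apply_eq_self (hta.trans h) hi)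
  have hmono := hnp.monotone_iterate_of_apply_lt hi ha
    fun x hx => (hS.apply_eq_of_apply_lt_of_apply_lt hf hx (hta ▸ hat)).trans hta
  have hle := hnp.iterate_le_of_monotone hi hmono
  have ha₁ : a < f a :=
    (hmono (Nat.zero_le 1)).lt_of_ne fun h => ha (hnp.eq_of_apply_eq_self h.symm hi)
  have ha₂ : f a ≤ f (f a) := hmono (Nat.le_succ 1)
  have hai : a < i := (hle 0).lt_of_ne ha
  obtain ⟨g, hg, -, hga, hgi⟩ := hS.exists_mem a (f a) i t ha₁ hit hai.ne
  -- `x ↦ f (g (f x))` sends `i ↦ a` and `t ↦ f (f a)`, two descents with distinct values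
  have hF := hS.comp_mem _ (hS.comp_mem f hf g hg) f hf
  have := hS.apply_eq_of_apply_lt_of_apply_lt hF (p₁ := i) (p₂ := t)
    (show f (g (f i)) < i by rwa [hi, hgi, hta])
    (show f (g (f t)) < t by rw [hta, hga]; exact (hle 2).trans_lt hit)
  rw [hi, hgi, hta, hga] at this
  exact (ha₁.trans_le ha₂).ne this

theorem apply_eq_of_apply_lt (hS : IsRich S t) (ht : IsTop t) (hf : f ∈ S) (hi : f i = i)
    (hp : f p₁ < p₁) : f p₁ = i := by
  rcases (ht i).lt_or_eq with hit | rfl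
  · have hfi := hS.apply_top_eq_of_lt ht hf hi hit
    rw [hS.apply_eq_of_apply_lt_of_apply_lt hf hp (hfi ▸ hit), hfi]
  · have hpt : p₁ < i := (ht p₁).lt_of_ne fun h => (h ▸ hp).ne hi
    obtain ⟨g, hg, hgt, hgp, -⟩ := hS.exists_mem_apply_eq_top ht hp hpt (hp.trans hpt).ne
    exact absurd ((hS.nonpermutational _ (hS.comp_mem g hg f hf)).eq_of_apply_eq_self
      (show f (g (f p₁)) = f p₁ by rw [hgp]) (show f (g i) = i by rw [hgt, hi])) (hp.trans hpt).ne

theorem apply_le_of_lt (hS : IsRich S t) (ht : IsTop t) (hf : f ∈ S) (hi : f i = i)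
    (hij : i < j) : f j ≤ j := by
  by_contra! hj
  have hfi := hS.apply_top_eq_of_lt ht hf hi (hij.trans_le (ht j))
  obtain ⟨g, hg, -, hgi, hgj⟩ :=
    hS.exists_mem_apply_eq_top ht hij (hj.trans_le (ht _)) (hij.trans hj).ne
  exact (hij.trans hj).ne <| (hS.nonpermutational _ (hS.comp_mem g hg f hf)).eq_of_apply_eq_swap
    (show f (g i) = f j by rw [hgi]) (show f (g (f j)) = i by rw [hgj, hfi])

end IsRich

/-- Lemma 1 of the paper.  `S` is a subsemigroup of `T_n` (composition acting on
the right) consisting of nonpermutational transformations; `S_i` is the set of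
members of `S` whose unique fixed point is `i`; the top element `⟨n-1,_⟩` of
`Fin n` plays the role of `n` in `{1,…,n}`.  Assume that for all `i < j` and
`k < l` with `i ≠ k` there is `f ∈ S_n` with `f i = j` and `f k = l`.  Then for
every `i`, every `f ∈ S_i` satisfies: `j < f j` whenever `j < i`, and `f j = i`
whenever `i ≤ j`. -/
theorem fix_structure_of_rich_subsemigroup
    (n : ℕ) (hn : 1 ≤ n) (S : Finset (Fin n → Fin n))
    (hclosed : ∀ f ∈ S, ∀ g ∈ S, (fun x => g (f x)) ∈ S)
    (hnp : ∀ f ∈ S, Nonpermutational f)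
    (hrich : ∀ i j k l : Fin n, i < j → k < l → i ≠ k →
      ∃ f ∈ S, FixIs f (⟨n - 1, by omega⟩ : Fin n) ∧ f i = j ∧ f k = l) :
    ∀ (i : Fin n) (f : Fin n → Fin n), f ∈ S → FixIs f i →
      (∀ j : Fin n, j < i → j < f j) ∧ (∀ j : Fin n, i ≤ j → f j = i) := by
  have hS : IsRich (S : Set (Fin n → Fin n)) ⟨n - 1, by omega⟩ := by
    refine ⟨hclosed, hnp, fun i j k l hij hkl hik => ?_⟩
    obtain ⟨f, hf, hfix, hfi, hfk⟩ := hrich i j k l hij hkl hik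
    exact ⟨f, hf, hfix.1, hfi, hfk⟩
  have ht : IsTop (⟨n - 1, by omega⟩ : Fin n) := fun x => Nat.le_sub_one_of_lt x.isLt
  intro i f hf hfix
  refine ⟨fun j hj => ?_, fun j hj => ?_⟩
  · refine lt_of_le_of_ne (le_of_not_gt fun hdesc => ?_) fun h => hj.ne (hfix.2 j h.symm)
    exact (hdesc.trans hj).ne (hS.apply_eq_of_apply_lt ht hf hfix.1 hdesc)
  · rcases hj.eq_or_lt with rfl | hij
    · exact hfix.1
    · exact hS.apply_eq_of_apply_lt ht hf hfix.1 <|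
        (hS.apply_le_of_lt ht hf hfix.1 hij).lt_of_ne fun h => hij.ne' (hfix.2 j h)
end

section
/- A function f : {1,…,n} → {1,…,n} (n ≥ 1) is nonpermutational if and only if some iterate of f is a constant function, i.e., there exists k ≥ 1 such that f^k is constant. Moreover, if f is nonpermutational then the n-th iterate f^n is already constant. -/
namespace Finset

variable {α : Type*} [DecidableEq α] {f : α → α}

theorem image_iterate_eq_self {s : Finset α} (h : s.image f = s) (m : ℕ) :
    s.image f^[m] = s := by
  induction m with
  | zero => simp
  | succ m ih => rw [Function.iterate_succ, ← image_image, h, ih]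

theorem card_eq_one_of_image_eq_self_of_iterate_eq_const {s : Finset α} (hs : s.Nonempty)
    (h : s.image f = s) {k : ℕ} {c : α} (hc : f^[k] = fun _ => c) : s.card = 1 := by
  rw [← image_iterate_eq_self h k, hc, image_const hs, card_singleton]

section Fintype

variable [Fintype α]

theorem image_image_univ_iterate (f : α → α) (k : ℕ) :
    (univ.image f^[k]).image f = univ.image f^[k + 1] := by
  rw [image_image, Function.iterate_succ']

theorem image_univ_iterate_succ_subset (f : α → α) (k : ℕ) :
    univ.image f^[k + 1] ⊆ univ.image f^[k] := by
  rw [Function.iterate_succ, ← image_image]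
  exact image_subset_image (subset_univ _)

theorem image_image_univ_iterate_eq_self_or_card_add_le (f : α → α) (k : ℕ) :
    (univ.image f^[k]).image f = univ.image f^[k] ∨
      (univ.image f^[k]).card + k ≤ Fintype.card α := by
  induction k with
  | zero => simp
  | succ k ih =>
    rw [← image_image_univ_iterate]
    by_cases hstable : (univ.image f^[k]).image f = univ.image f^[k]
    · exact Or.inl (by rw [hstable, hstable])
    · have hle := ih.resolve_left hstable
      have hlt : ((univ.image f^[k]).image f).card < (univ.image f^[k]).card :=
        card_lt_card (ssubset_iff_subset_ne.mpr
          ⟨image_image_univ_iterate f k ▸ image_univ_iterate_succ_subset f k, hstable⟩)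
      exact Or.inr (by omega)

theorem image_image_univ_iterate_card (f : α → α) :
    (univ.image f^[Fintype.card α]).image f = univ.image f^[Fintype.card α] := by
  rcases image_image_univ_iterate_eq_self_or_card_add_le f (Fintype.card α) with h | h
  · exact h
  · rw [card_eq_zero.mp (show (univ.image f^[Fintype.card α]).card = 0 by omega), image_empty]

end Fintype

end Finset

theorem Nonpermutational.of_iterate_eq_const {n : ℕ} {f : Fin n → Fin n} {k : ℕ} {c : Fin n}
    (hc : f^[k] = fun _ => c) : Nonpermutational f := fun _ hX hXf =>
  Finset.card_eq_one_of_image_eq_self_of_iterate_eq_const hX hXf hc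

theorem Nonpermutational.exists_iterate_eq_const {n : ℕ} (hn : 1 ≤ n) {f : Fin n → Fin n}
    (hf : Nonpermutational f) : ∃ c : Fin n, f^[n] = fun _ => c := by
  have hinv := Finset.image_image_univ_iterate_card f
  rw [Fintype.card_fin] at hinv
  have hne : (Finset.univ.image f^[n]).Nonempty :=
    (Finset.univ_nonempty_iff.mpr ⟨⟨0, hn⟩⟩).image _
  obtain ⟨c, hc⟩ := Finset.card_eq_one.mp (hf _ hne hinv)
  exact ⟨c, funext fun x =>
    Finset.mem_singleton.mp (hc ▸ Finset.mem_image_of_mem _ (Finset.mem_univ x))⟩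

/-- `f : Fin n → Fin n` (with `n ≥ 1`) is nonpermutational iff some iterate
`f^[k]` (`k ≥ 1`) is a constant function; moreover in that case the `n`-th
iterate `f^[n]` is already constant. -/
theorem nonpermutational_iff_iterate_constant (n : ℕ) (hn : 1 ≤ n) (f : Fin n → Fin n) :
    (Nonpermutational f ↔ ∃ k : ℕ, 1 ≤ k ∧ ∃ c : Fin n, f^[k] = fun _ => c) ∧
    (Nonpermutational f → ∃ c : Fin n, f^[n] = fun _ => c) :=
  ⟨⟨fun hf => ⟨n, hn, hf.exists_iterate_eq_const hn⟩,
    fun ⟨_, _, _, hc⟩ => .of_iterate_eq_const hc⟩,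
   fun hf => hf.exists_iterate_eq_const hn⟩
end

section
/- Let n ≥ 1, let i ∈ {1,…,n}, and let S be a subsemigroup of T_n consisting only of nonpermutational transformations, all of which have i as their unique fixed point. Then |S| ≤ (n−1)!. -/
/-!
For `y ≠ i`, let `y ≺ x` mean that some `f ∈ S` sends `y` to `x`. Closure under composition makes
`≺` transitive, and uniqueness of the fixed point makes it irreflexive, so a `≺`-minimal point
`m ≠ i` exists; it is a value of no `f ∈ S` (for `f i = i ≠ m`). Hence every `f ∈ S` restricts to
the complement of `m`, the restrictions form a semigroup of the same kind on `n - 1` points, and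
`f` is determined by its restriction together with `f m ≠ m`. Induction gives
`|S| ≤ (n - 2)! (n - 1) = (n - 1)!`.
-/

open Finset
open scoped Nat

lemma exists_ne_forall_apply_ne {α : Type*} [Finite α] [Nontrivial α] {S : Finset (α → α)} {i : α}
    (hclosed : ∀ f ∈ S, ∀ g ∈ S, (fun x => g (f x)) ∈ S)
    (hfix : ∀ f ∈ S, ∀ x, f x = x ↔ x = i) :
    ∃ m ≠ i, ∀ f ∈ S, ∀ x, f x ≠ m := by
  let r (y x : α) : Prop := y ≠ i ∧ ∃ f ∈ S, f y = x
  have : IsTrans α r := ⟨fun x y z ⟨hx, f, hf, hxy⟩ ⟨_, g, hg, hyz⟩ =>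
    ⟨hx, _, hclosed f hf g hg, by simp only [hxy, hyz]⟩⟩
  have : Std.Irrefl r := ⟨fun x ⟨hx, f, hf, hfx⟩ => hx ((hfix f hf x).1 hfx)⟩
  obtain ⟨m, hm, hmin⟩ := (Finite.wellFounded_of_trans_of_irrefl r).has_min {x | x ≠ i}
    (exists_ne i)
  refine ⟨m, hm, fun f hf x hfx => ?_⟩
  by_cases hx : x = i
  · rw [hx, (hfix f hf i).2 rfl] at hfx
    exact hm hfx.symm
  · exact hmin x hx ⟨hx, f, hf, hfx⟩

/-- Only meaningful when `m` is not a value of `f`; where `f` hits `m` the identity is used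
instead. -/
def restrictNe {α : Type*} [DecidableEq α] (m : α) (f : α → α) (x : {x // x ≠ m}) : {x // x ≠ m} :=
  if h : f x = m then x else ⟨f x, h⟩

section
variable {α : Type*} [DecidableEq α] {m : α} {f g : α → α}

lemma coe_restrictNe (hf : ∀ x, f x ≠ m) (x : {x // x ≠ m}) : (restrictNe m f x : α) = f x := by
  simp [restrictNe, hf]

lemma restrictNe_comp (hf : ∀ x, f x ≠ m) (hg : ∀ x, g x ≠ m) :
    (fun x => restrictNe m g (restrictNe m f x)) = restrictNe m (fun x => g (f x)) := by
  funext x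
  ext
  rw [coe_restrictNe hg, coe_restrictNe hf, coe_restrictNe (fun x => hg (f x))]

lemma restrictNe_apply_eq_self_iff (hf : ∀ x, f x ≠ m) {x : {x // x ≠ m}} :
    restrictNe m f x = x ↔ f x = x := by
  rw [Subtype.ext_iff, coe_restrictNe hf]

lemma card_le_card_image_restrictNe_mul [Fintype α] {S : Finset (α → α)}
    (hS : ∀ f ∈ S, ∀ x, f x ≠ m) :
    #S ≤ #(S.image (restrictNe m)) * (Nat.card α - 1) := by
  calc #S ≤ #(S.image (restrictNe m) ×ˢ univ.erase m) := by
        refine card_le_card_of_injOn (fun f => (restrictNe m f, f m)) (fun f hf => ?_) ?_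
        · simp only [coe_product, Set.mem_prod, mem_coe, mem_image, mem_erase, mem_univ, and_true]
          exact ⟨⟨f, hf, rfl⟩, hS f hf m⟩
        · intro f hf g hg hfg
          simp only [Prod.mk.injEq] at hfg
          funext x
          by_cases hx : x = m
          · exact hx ▸ hfg.2
          · simpa [coe_restrictNe (hS f hf), coe_restrictNe (hS g hg)]
              using congrArg (fun F => (F ⟨x, hx⟩ : α)) hfg.1
    _ = #(S.image (restrictNe m)) * (Nat.card α - 1) := by
        rw [card_product, card_erase_of_mem (mem_univ m), card_univ, Nat.card_eq_fintype_card]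

lemma card_subtype_ne [Finite α] : Nat.card {x // x ≠ m} = Nat.card α - 1 := by
  have := Fintype.ofFinite α
  simp [Nat.card_eq_fintype_card, Fintype.card_subtype_compl]

end

theorem card_le_factorial_of_forall_apply_eq_self_iff {α : Type*} [Finite α]
    (S : Finset (α → α)) (i : α)
    (hclosed : ∀ f ∈ S, ∀ g ∈ S, (fun x => g (f x)) ∈ S)
    (hfix : ∀ f ∈ S, ∀ x, f x = x ↔ x = i) :
    #S ≤ (Nat.card α - 1)! := by
  induction α using Finite.induction_subsingleton_or_nontrivial with
  | hbase α => exact (card_le_one_of_subsingleton S).trans (Nat.factorial_pos _)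
  | hstep α ih =>
    classical
    have := Fintype.ofFinite α
    obtain ⟨m, hmi, hS⟩ := exists_ne_forall_apply_ne hclosed hfix
    have hclosed' : ∀ f ∈ S.image (restrictNe m), ∀ g ∈ S.image (restrictNe m),
        (fun x => g (f x)) ∈ S.image (restrictNe m) := by
      simp only [mem_image]
      rintro _ ⟨f, hf, rfl⟩ _ ⟨g, hg, rfl⟩
      exact ⟨_, hclosed f hf g hg, (restrictNe_comp (hS f hf) (hS g hg)).symm⟩
    have hfix' : ∀ f ∈ S.image (restrictNe m), ∀ x, f x = x ↔ x = ⟨i, hmi.symm⟩ := by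
      simp only [mem_image]
      rintro _ ⟨f, hf, rfl⟩ x
      rw [restrictNe_apply_eq_self_iff (hS f hf), Subtype.ext_iff]
      exact hfix f hf x
    have hcard : 1 < Nat.card α := Finite.one_lt_card
    calc #S ≤ #(S.image (restrictNe m)) * (Nat.card α - 1) :=
          card_le_card_image_restrictNe_mul hS
      _ ≤ (Nat.card α - 1 - 1)! * (Nat.card α - 1) := by
          gcongr
          rw [← card_subtype_ne]
          exact ih _ (by rw [card_subtype_ne]; omega) _ _ hclosed' hfix'
      _ = (Nat.card α - 1)! := by
          rw [mul_comm, Nat.mul_factorial_pred (by omega)]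

theorem card_le_of_common_fixed_point_general
    (n : ℕ) (i : Fin n) (S : Finset (Fin n → Fin n))
    (hclosed : ∀ f ∈ S, ∀ g ∈ S, (fun x => g (f x)) ∈ S)
    (hfix : ∀ f ∈ S, FixIs f i) :
    S.card ≤ Nat.factorial (n - 1) := by
  simpa using card_le_factorial_of_forall_apply_eq_self_iff S i hclosed
    fun f hf x => ⟨(hfix f hf).2 x, fun hx => hx ▸ (hfix f hf).1⟩

/-- A subsemigroup of `T_n` (composition acting on the right) consisting only of
nonpermutational transformations all sharing the unique fixed point `i` has at
most `(n-1)!` elements. -/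
theorem card_le_of_common_fixed_point
    (n : ℕ) (hn : 1 ≤ n) (i : Fin n) (S : Finset (Fin n → Fin n))
    (hclosed : ∀ f ∈ S, ∀ g ∈ S, (fun x => g (f x)) ∈ S)
    (hnp : ∀ f ∈ S, Nonpermutational f)
    (hfix : ∀ f ∈ S, FixIs f i) :
    S.card ≤ Nat.factorial (n - 1) :=
  card_le_of_common_fixed_point_general n i S hclosed hfix
end

section
/- Let n ≥ 1 and let S be a subsemigroup of T_n consisting only of nonpermutational transformations. Then |S| ≤ n!. -/
/-
Every nonpermutational transformation `f` has exactly one fixed point: the periodic points of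
`f` form a nonempty set mapped onto itself by `f`, so they reduce to a single point.
Hence `S` is covered by the `n` sets `S_p = {f ∈ S | f p = p}`, and it suffices to show
`|S_p| ≤ (n - 1)!`. On `S_p`, the relation "`x ≠ p` and `g x = y` for some `g ∈ S_p`" is
transitive since `S_p` is closed under composition, and irreflexive since `p` is the only fixed
point of each `g ∈ S_p`. Every `f ∈ S_p` sends each `x ≠ p` to one of its successors for this
strict order, and in a strict order on `n` points the numbers of successors of the `n - 1`
points other than `p` multiply to at most `(n - 1)!`: a minimal point has at most `n - 1`
successors and is a successor of nothing else, so it can be removed inductively.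
-/

open Finset Function
open scoped Nat

theorem Function.nonempty_periodicPts {α : Type*} [Finite α] [Nonempty α] (f : α → α) :
    (periodicPts f).Nonempty := by
  obtain ⟨x⟩ := ‹Nonempty α›
  obtain ⟨m, n, hmn, hiter⟩ := Finite.exists_ne_map_eq_of_infinite (f^[·] x)
  wlog hlt : m < n generalizing m n
  · exact this n m hmn.symm hiter.symm (by omega)
  refine ⟨f^[m] x, mk_mem_periodicPts (Nat.sub_pos_of_lt hlt) ?_⟩
  rw [IsPeriodicPt, IsFixedPt, ← iterate_add_apply, Nat.sub_add_cancel hlt.le]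
  exact hiter.symm

namespace Nonpermutational

variable {n : ℕ} {f : Fin n → Fin n}

theorem exists_isFixedPt [NeZero n] (hf : Nonpermutational f) : ∃ p, IsFixedPt f p := by
  classical
  set X := (periodicPts f).toFinset
  have hX : X.image f = X := by
    rw [← coe_inj, coe_image, Set.coe_toFinset, (bijOn_periodicPts f).image_eq]
  obtain ⟨p, hXp⟩ := card_eq_one.mp (hf X (by simpa [X] using nonempty_periodicPts f) hX)
  rw [hXp] at hX
  refine ⟨p, mem_singleton.mp ?_⟩
  rw [← hX]
  exact mem_image_of_mem f (mem_singleton_self p)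

theorem eq_of_isFixedPt (hf : Nonpermutational f) {p q : Fin n} (hp : IsFixedPt f p)
    (hq : IsFixedPt f q) : p = q := by
  classical
  by_contra hpq
  have hpair : ({p, q} : Finset (Fin n)).image f = {p, q} := by
    rw [image_insert, image_singleton, hp.eq, hq.eq]
  simpa [card_pair hpq] using hf {p, q} (insert_nonempty p {q}) hpair

end Nonpermutational

theorem prod_card_filter_le_descFactorial {α : Type*} [DecidableEq α] [Finite α]
    (r : α → α → Prop) [DecidableRel r] [IsTrans α r] [Std.Irrefl r] {s t : Finset α}
    (hst : s ⊆ t) : ∏ x ∈ s, #{y ∈ t | r x y} ≤ (#t - 1).descFactorial #s := by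
  induction s using Finset.strongInduction generalizing t with
  | H s ih =>
  rcases s.eq_empty_or_nonempty with rfl | hs
  · simp
  obtain ⟨a, has, hmin⟩ := (Finite.wellFounded_of_trans_of_irrefl r).has_min (s : Set α) hs
  have hat : a ∈ t := hst has
  have hsucc_a : #{y ∈ t | r a y} ≤ #t - 1 := by
    rw [← card_erase_of_mem hat]
    exact card_le_card fun y hy ↦ by
      rw [mem_filter] at hy
      exact mem_erase.mpr ⟨fun hya ↦ irrefl a (hya ▸ hy.2), hy.1⟩
  have hsucc_x : ∀ x ∈ s.erase a, {y ∈ t | r x y} = {y ∈ t.erase a | r x y} := by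
    intro x hx
    rw [filter_erase, erase_eq_of_notMem]
    simpa only [mem_filter, not_and] using fun _ ↦ hmin x (mem_of_mem_erase hx)
  have hrest := ih (s.erase a) (erase_ssubset has) (erase_subset_erase a hst)
  rw [← mul_prod_erase s (fun x ↦ #{y ∈ t | r x y}) has,
    prod_congr rfl fun x hx ↦ congrArg card (hsucc_x x hx)]
  obtain ⟨k, hk⟩ : ∃ k, #s = k + 1 := Nat.exists_eq_add_one.mpr (card_pos.mpr hs)
  calc #{y ∈ t | r a y} * ∏ x ∈ s.erase a, #{y ∈ t.erase a | r x y}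
      ≤ (#t - 1) * (#t - 1 - 1).descFactorial k := by
        rw [card_erase_of_mem hat, card_erase_of_mem has, hk] at hrest
        exact Nat.mul_le_mul hsucc_a hrest
    _ = (#t - 1).descFactorial #s := by
        obtain ⟨m, hm⟩ : ∃ m, #t = m + 1 :=
          Nat.exists_eq_add_one.mpr (card_pos.mpr ⟨a, hat⟩)
        rw [hk, hm, Nat.add_sub_cancel]
        cases m with
        | zero => simp
        | succ j => rw [Nat.add_sub_cancel, Nat.succ_descFactorial_succ]

theorem card_le_factorial_pred_of_isFixedPt_iff {α : Type*} [Fintype α] [DecidableEq α]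
    {T : Finset (α → α)} (hT : ∀ f ∈ T, ∀ g ∈ T, g ∘ f ∈ T) {p : α}
    (hfix : ∀ f ∈ T, ∀ x, IsFixedPt f x ↔ x = p) :
    #T ≤ (Fintype.card α - 1)! := by
  classical
  let r : α → α → Prop := fun x y ↦ x ≠ p ∧ ∃ g ∈ T, g x = y
  have : IsTrans α r := ⟨fun x y z ⟨hxp, g, hg, hgx⟩ ⟨_, h, hh, hhy⟩ ↦
    ⟨hxp, h ∘ g, hT g hg h hh, by rw [comp_apply, hgx, hhy]⟩⟩
  have : Std.Irrefl r := ⟨fun x ⟨hxp, g, hg, hgx⟩ ↦ hxp ((hfix g hg x).mp hgx)⟩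
  have hsub : T ⊆ Fintype.piFinset fun x ↦
      if x = p then {p} else ({y | r x y} : Finset α) := by
    intro f hf
    rw [Fintype.mem_piFinset]
    intro x
    split_ifs with hx
    · rw [hx, mem_singleton]
      exact (hfix f hf p).mpr rfl
    · simpa using ⟨hx, f, hf, rfl⟩
  calc #T ≤ ∏ x, #(if x = p then {p} else ({y | r x y} : Finset α)) :=
        (card_le_card hsub).trans (Fintype.card_piFinset _).le
    _ = ∏ x ∈ univ.erase p, #{y | r x y} := by
        rw [← mul_prod_erase univ _ (mem_univ p), if_pos rfl, card_singleton, one_mul]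
        exact prod_congr rfl fun x hx ↦ by rw [if_neg (ne_of_mem_erase hx)]
    _ ≤ (#univ - 1).descFactorial #(univ.erase p) :=
        prod_card_filter_le_descFactorial r (erase_subset p univ)
    _ = (Fintype.card α - 1)! := by
        rw [card_erase_of_mem (mem_univ p), card_univ, Nat.descFactorial_self]

/-- Any subsemigroup of `T_n` (composition acting on the right) consisting
only of nonpermutational transformations has at most `n!` elements. -/
theorem card_le_factorial_of_nonpermutational_subsemigroup
    (n : ℕ) (hn : 1 ≤ n) (S : Finset (Fin n → Fin n))
    (hclosed : ∀ f ∈ S, ∀ g ∈ S, (fun x => g (f x)) ∈ S)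
    (hnp : ∀ f ∈ S, Nonpermutational f) :
    S.card ≤ Nat.factorial n := by
  classical
  have : NeZero n := ⟨by omega⟩
  have hcover : S ⊆ univ.biUnion fun p ↦ {f ∈ S | f p = p} := by
    intro f hf
    obtain ⟨p, hp⟩ := (hnp f hf).exists_isFixedPt
    exact mem_biUnion.mpr ⟨p, mem_univ p, mem_filter.mpr ⟨hf, hp⟩⟩
  have hfibre (p : Fin n) : #{f ∈ S | f p = p} ≤ (n - 1)! := by
    simpa using card_le_factorial_pred_of_isFixedPt_iff (p := p)
      (fun f hf g hg ↦ by
        rw [mem_filter] at hf hg ⊢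
        exact ⟨hclosed f hf.1 g hg.1, by rw [comp_apply, hf.2, hg.2]⟩)
      (fun f hf x ↦ by
        rw [mem_filter] at hf
        exact ⟨fun hx ↦ (hnp f hf.1).eq_of_isFixedPt hx hf.2, fun hx ↦ hx ▸ hf.2⟩)
  calc #S ≤ ∑ p, #{f ∈ S | f p = p} := (card_le_card hcover).trans card_biUnion_le
    _ ≤ ∑ _p : Fin n, (n - 1)! := sum_le_sum fun p _ ↦ hfibre p
    _ = n ! := by
        rw [sum_const, card_univ, Fintype.card_fin, smul_eq_mul, Nat.mul_factorial_pred (by omega)]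
end

section
/- Let n ≥ 1, let i ∈ {1,…,n}, and let S be a subsemigroup of T_n consisting only of nonpermutational transformations, all of which have i as their unique fixed point. Define the relation ≺ on {1,…,n} by: j ≺ k if and only if j ≠ i and jf = k for some f ∈ S. Then ≺ is transitive and irreflexive (i.e., it is a strict partial order), and i is its largest element in the sense that j ≺ i whenever j ≺ k for some k and j ≠ i implies jg = i for some g ∈ S; in particular no j lies on a ≺-cycle. -/
/-- The relation `j ≺ k` iff `j ≠ i` and `f j = k` for some `f ∈ S`. -/
def Prec {n : ℕ} (S : Finset (Fin n → Fin n)) (i : Fin n) (j k : Fin n) : Prop :=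
  j ≠ i ∧ ∃ f ∈ S, f j = k

/-!
The ranges of the iterates `f^[m]` of a transformation `f` of a finite set form a decreasing chain,
so they stabilise at some `X = range f^[N]` with `f(X) = X`. If `f` is nonpermutational, `X` is a
single point, which is then fixed by `f`; hence `f^[N+1] ∈ S` sends every point to the unique fixed
point `i`.
-/

open Function Finset

section StableRange

variable {α : Type*} [Fintype α] [DecidableEq α]

theorem antitone_image_univ_iterate (f : α → α) : Antitone fun m => univ.image f^[m] := by
  refine antitone_nat_of_succ_le fun m => ?_
  rw [iterate_succ, ← image_image]
  exact image_subset_image (subset_univ _)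

theorem exists_image_univ_iterate_succ_eq (f : α → α) :
    ∃ N, univ.image f^[N + 1] = univ.image f^[N] := by
  obtain ⟨N, hN⟩ := WellFoundedLT.antitone_chain_condition (antitone_image_univ_iterate f)
  exact ⟨N, (hN (N + 1) N.le_succ).symm⟩

end StableRange

theorem Nonpermutational.exists_forall_isFixedPt_iterate {n : ℕ} {f : Fin n → Fin n}
    (hf : Nonpermutational f) : ∃ N, ∀ x, IsFixedPt f (f^[N] x) := by
  obtain ⟨N, hN⟩ := exists_image_univ_iterate_succ_eq f
  refine ⟨N, fun x => ?_⟩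
  set X := univ.image f^[N]
  have hX_inv : X.image f = X := by rw [image_image, ← iterate_succ', hN]
  have hx : f^[N] x ∈ X := mem_image_of_mem _ (mem_univ x)
  have hfx : f (f^[N] x) ∈ X := by
    rw [← hX_inv]
    exact mem_image_of_mem f hx
  obtain ⟨z, hz⟩ := card_eq_one.mp (hf X ⟨_, hx⟩ hX_inv)
  rw [hz, mem_singleton] at hx hfx
  exact hfx.trans hx.symm

theorem iterate_succ_mem {β : Type*} {S : Set (β → β)}
    (hclosed : ∀ f ∈ S, ∀ g ∈ S, (fun x => g (f x)) ∈ S) {f : β → β} (hf : f ∈ S) (m : ℕ) :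
    f^[m + 1] ∈ S := by
  induction m with
  | zero => simpa using hf
  | succ m ih =>
    rw [iterate_succ']
    exact hclosed _ ih f hf

theorem prec_strict_partial_order_with_top_general
    (n : ℕ) (i : Fin n) (S : Finset (Fin n → Fin n))
    (hclosed : ∀ f ∈ S, ∀ g ∈ S, (fun x => g (f x)) ∈ S)
    (hnp : ∀ f ∈ S, Nonpermutational f)
    (hfix : ∀ f ∈ S, FixIs f i) :
    (∀ a b c : Fin n, Prec S i a b → Prec S i b c → Prec S i a c) ∧
    (∀ a : Fin n, ¬ Prec S i a a) ∧
    (∀ a b : Fin n, Prec S i a b → ∃ g ∈ S, g a = i) := by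
  refine ⟨?_, ?_, ?_⟩
  · rintro a b c ⟨ha, f, hf, rfl⟩ ⟨-, g, hg, rfl⟩
    exact ⟨ha, _, hclosed f hf g hg, rfl⟩
  · rintro a ⟨ha, f, hf, hfa⟩
    exact ha ((hfix f hf).2 a hfa)
  · rintro a b ⟨-, f, hf, -⟩
    obtain ⟨N, hN⟩ := (hnp f hf).exists_forall_isFixedPt_iterate
    refine ⟨f^[N + 1], iterate_succ_mem (S := ↑S) (fun f hf g hg => hclosed f hf g hg) hf N, ?_⟩
    rw [iterate_succ_apply', hN a, (hfix f hf).2 _ (hN a)]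

/-- Let `S` be a subsemigroup of `T_n` (composition acting on the right) of
nonpermutational transformations all having `i` as their unique fixed point,
and let `j ≺ k` iff `j ≠ i` and `jf = k` for some `f ∈ S`.  Then `≺` is
transitive and irreflexive (a strict partial order, hence has no cycles), and
`i` is its largest element: whenever `j ≺ k` for some `k`, also `j g = i` for
some `g ∈ S` (i.e. `j ≺ i`). -/
theorem prec_strict_partial_order_with_top
    (n : ℕ) (hn : 1 ≤ n) (i : Fin n) (S : Finset (Fin n → Fin n))
    (hclosed : ∀ f ∈ S, ∀ g ∈ S, (fun x => g (f x)) ∈ S)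
    (hnp : ∀ f ∈ S, Nonpermutational f)
    (hfix : ∀ f ∈ S, FixIs f i) :
    (∀ a b c : Fin n, Prec S i a b → Prec S i b c → Prec S i a c) ∧
    (∀ a : Fin n, ¬ Prec S i a a) ∧
    (∀ a b : Fin n, Prec S i a b → ∃ g ∈ S, g a = i) :=
  prec_strict_partial_order_with_top_general n i S hclosed hnp hfix
end

section
/- Let A = (Q, Σ, δ, q₀, F) be a finite deterministic automaton that is connected and reduced. Then the language L(A) recognized by A is generalized definite if and only if A avoids the pattern P_g, i.e., there do NOT exist distinct states p, q ∈ Q and nonempty words x, y ∈ Σ⁺ with δ*(p,x) = p, δ*(q,x) = q and δ*(p,y) = q. -/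
/-- Every state of `M` is reachable from the start state. -/
def DFA.Connected {α σ : Type*} (M : DFA α σ) : Prop :=
  ∀ q : σ, ∃ u : List α, M.evalFrom M.start u = q

/-- `M` is reduced: connected, and any two distinct states are distinguishable
by some word (exactly one of the two resulting states is accepting). -/
def DFA.Reduced {α σ : Type*} (M : DFA α σ) : Prop :=
  M.Connected ∧ ∀ p q : σ, p ≠ q →
    ∃ u : List α, ¬(M.evalFrom p u ∈ M.accept ↔ M.evalFrom q u ∈ M.accept)

/-- `M` admits the pattern `P_g`: distinct states `p, q` and nonempty words
`x, y` with `px = p`, `qx = q` and `py = q`. -/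
def DFA.AdmitsPg {α σ : Type*} (M : DFA α σ) : Prop :=
  ∃ (p q : σ) (x y : List α), p ≠ q ∧ x ≠ [] ∧ y ≠ [] ∧
    M.evalFrom p x = p ∧ M.evalFrom q x = q ∧ M.evalFrom p y = q

/-- A language is generalized definite if membership only depends on the
prefix and suffix of length `k`, for some constant `k`. -/
def GeneralizedDefinite {α : Type*} (L : Language α) : Prop :=
  ∃ k : ℕ, ∀ x₁ x₂ y : List α, x₁.length = k → x₂.length = k →
    ((x₁ ++ y ++ x₂) ∈ L ↔ (x₁ ++ x₂) ∈ L)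

/-!
Without `P_g`, a state `s` on a cycle `b` can always be returned to: pumping `b` after any detour
brings the run back to `s`, since otherwise the state reached and `s` would form `P_g` with a
power of `b`. Hence two states reached from `s` that share a cycle word are connected by a
nonempty path and coincide. Taking `k = |Q|²`, the prefix `x₁` of a word `x₁ y x₂` runs into such
an `s`, and by pigeonhole on pairs the runs of `x₁ y` and `x₁` through `x₂` reach two states with a
common cycle, so they agree. Conversely, given `P_g`, pumping `x` makes the prefix and suffix long
while `y` switches the run from `p` to `q`, which a distinguishing word detects.
-/

open List

theorem GeneralizedDefinite.exists_mem_append_iff {α : Type*} {L : Language α}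
    (h : GeneralizedDefinite L) :
    ∃ k, ∀ u y v : List α, k ≤ u.length → k ≤ v.length → (u ++ y ++ v ∈ L ↔ u ++ v ∈ L) := by
  obtain ⟨k, hk⟩ := h
  refine ⟨k, fun u y v hu hv => ?_⟩
  obtain ⟨x₁, r, rfl, h₁⟩ : ∃ x₁ r, u = x₁ ++ r ∧ x₁.length = k :=
    ⟨u.take k, u.drop k, (take_append_drop k u).symm, by simp [hu]⟩
  obtain ⟨s, x₂, rfl, h₂⟩ : ∃ s x₂, v = s ++ x₂ ∧ x₂.length = k :=
    ⟨v.take (v.length - k), v.drop (v.length - k), (take_append_drop _ v).symm, by simp; omega⟩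
  simpa only [append_assoc] using
    (hk x₁ x₂ (r ++ y ++ s) h₁ h₂).trans (hk x₁ x₂ (r ++ s) h₁ h₂).symm

namespace DFA

theorem evalFrom_inter {α : Type*} {σ₁ σ₂ : Type v} (M₁ : DFA α σ₁) (M₂ : DFA α σ₂)
    (s₁ : σ₁) (s₂ : σ₂) (x : List α) :
    (M₁.inter M₂).evalFrom (s₁, s₂) x = (M₁.evalFrom s₁ x, M₂.evalFrom s₂ x) := by
  induction x generalizing s₁ s₂ with
  | nil => rfl
  | cons a x ih => simp only [evalFrom_cons, inter_step, ih]

variable {α σ : Type*} (M : DFA α σ)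

theorem evalFrom_flatten_replicate {s : σ} {x : List α} (hx : M.evalFrom s x = s) (n : ℕ) :
    M.evalFrom s (replicate n x).flatten = s :=
  M.evalFrom_of_pow hx (Language.mem_kstar.2 ⟨_, rfl, fun _ hy => eq_of_mem_replicate hy⟩)

theorem not_admitsPg_of_generalizedDefinite (hred : M.Reduced)
    (h : GeneralizedDefinite M.accepts) : ¬ M.AdmitsPg := by
  obtain ⟨k, hk⟩ := h.exists_mem_append_iff
  rintro ⟨p, q, x, y, hpq, hx, -, hpx, hqx, hpy⟩
  obtain ⟨w, hw⟩ := hred.1 p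
  obtain ⟨u, hu⟩ := hred.2 p q hpq
  set X := (replicate k x).flatten
  have hXp : M.evalFrom p X = p := M.evalFrom_flatten_replicate hpx k
  have hXq : M.evalFrom q X = q := M.evalFrom_flatten_replicate hqx k
  have hX : k ≤ X.length := by simpa [X] using Nat.le_mul_of_pos_right k (length_pos_iff.2 hx)
  have := hk (w ++ X) y (X ++ u) (by simp; omega) (by simp; omega)
  simp only [mem_accepts, eval, evalFrom_of_append, hw, hXp, hXq, hpy] at this
  exact hu this.symm

section NotAdmitsPg

variable {M}

theorem eq_of_not_admitsPg (hM : ¬ M.AdmitsPg) {p q : σ} {x y : List α} (hx : x ≠ [])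
    (hp : M.evalFrom p x = p) (hq : M.evalFrom q x = q) (hpq : M.evalFrom p y = q) : p = q := by
  by_contra hne
  rcases eq_or_ne y [] with rfl | hy
  · exact hne hpq
  · exact hM ⟨p, q, x, y, hne, hx, hy, hp, hq, hpq⟩

theorem exists_evalFrom_append_flatten_replicate_eq [Finite σ] (hM : ¬ M.AdmitsPg) {s : σ}
    {b : List α} (hb : b ≠ []) (hs : M.evalFrom s b = s) (v : List α) :
    ∃ e, M.evalFrom s (v ++ (replicate e b).flatten) = s := by
  obtain ⟨i, j, hij, heq⟩ :=
    Finite.exists_ne_map_eq_of_infinite fun n => M.evalFrom s (v ++ (replicate n b).flatten)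
  wlog hlt : i < j generalizing i j
  · exact this j i hij.symm heq.symm (by omega)
  refine ⟨i, (eq_of_not_admitsPg hM (x := (replicate (j - i) b).flatten) ?_
    (M.evalFrom_flatten_replicate hs _) ?_ rfl).symm⟩
  · simp [hb]; omega
  · rw [← evalFrom_of_append, append_assoc, ← flatten_append, ← replicate_add,
      Nat.add_sub_cancel' hlt.le]
    exact heq.symm

theorem evalFrom_eq_of_not_admitsPg [Finite σ] (hM : ¬ M.AdmitsPg) {s : σ} {b x u w : List α}
    (hb : b ≠ []) (hs : M.evalFrom s b = s) (hx : x ≠ [])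
    (hu : M.evalFrom (M.evalFrom s u) x = M.evalFrom s u)
    (hw : M.evalFrom (M.evalFrom s w) x = M.evalFrom s w) :
    M.evalFrom s w = M.evalFrom s u := by
  obtain ⟨e, he⟩ := exists_evalFrom_append_flatten_replicate_eq hM hb hs w
  refine eq_of_not_admitsPg hM hx hw hu (y := (replicate e b).flatten ++ u) ?_
  rw [← evalFrom_of_append, ← append_assoc, evalFrom_of_append, he]

theorem generalizedDefinite_accepts_of_not_admitsPg [Finite σ] (hM : ¬ M.AdmitsPg) :
    GeneralizedDefinite M.accepts := by
  have := Fintype.ofFinite σ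
  refine ⟨Fintype.card (σ × σ), fun x₁ x₂ y h₁ h₂ => ?_⟩
  obtain ⟨s, a, b, c, rfl, -, hb, rfl, hs, -⟩ :=
    M.evalFrom_split (s := M.start) (x := x₁) (by simp [Fintype.card_prod] at h₁ ⊢; nlinarith) rfl
  obtain ⟨⟨P, Q⟩, a', b', c', rfl, -, hb', hPQ, hfix, -⟩ :=
    (M.inter M).evalFrom_split
      (s := (M.evalFrom M.start (a ++ b ++ c ++ y), M.evalFrom M.start (a ++ b ++ c))) (x := x₂)
      (by simp [h₂]) rfl
  simp only [evalFrom_inter, Prod.mk.injEq] at hPQ hfix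
  obtain ⟨rfl, rfl⟩ := hPQ
  simp only [evalFrom_of_append, hs] at hfix
  have hmerge := evalFrom_eq_of_not_admitsPg hM hb hs hb' (u := c ++ y ++ a') (w := c ++ a')
    (by simpa only [evalFrom_of_append] using hfix.1)
    (by simpa only [evalFrom_of_append] using hfix.2)
  simp only [evalFrom_of_append] at hmerge
  simp only [mem_accepts, eval, evalFrom_of_append, hs, hfix, hmerge]

end NotAdmitsPg

end DFA

theorem generalizedDefinite_iff_avoids_Pg_general {α σ : Type*} [Finite σ]
    (M : DFA α σ) (hred : M.Reduced) :
    GeneralizedDefinite M.accepts ↔ ¬ M.AdmitsPg :=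
  ⟨M.not_admitsPg_of_generalizedDefinite hred, M.generalizedDefinite_accepts_of_not_admitsPg⟩

/-- A connected, reduced finite automaton recognizes a generalized definite
language iff it avoids the pattern `P_g`. -/
theorem generalizedDefinite_iff_avoids_Pg {α σ : Type*} [Finite α] [Finite σ]
    (M : DFA α σ) (hred : M.Reduced) :
    GeneralizedDefinite M.accepts ↔ ¬ M.AdmitsPg :=
  generalizedDefinite_iff_avoids_Pg_general M hred
end
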